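/- Let n ≥ 3 be odd and let p₁,…,p_n be odd integers. Let M be the (n−1)×(n−1) symmetric tridiagonal integer matrix with diagonal entries M[i,i] = p_i + p_{i+1} and off-diagonal entries M[i,i+1] = M[i+1,i] = −p_{i+1}, regarded as a real symmetric matrix, and write σ_i = σ_i(p₁,…,p_{i+1}). Then the signature of M (the number of positive eigenvalues minus the number of negative eigenvalues, counted with multiplicity) equals Σ_{i=1}^{n−1} sign(σ_{i−1} · σ_i), where sign(0) = 0. (This is the signature of the pretzel knot P(p₁,…,p_n).) -/

import Mathlib

open Matrix

/-- `esym p a b j` is the `j`-th elementary symmetric polynomial of the values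
`p a, p (a+1), …, p (b-1)`; in the 1-indexed notation of the paper, where `p i`
denotes `p_{i+1}`, this is `σ_j(p_{a+1},…,p_b)`. -/
def esym (p : ℕ → ℤ) (a b j : ℕ) : ℤ :=
  ∑ s ∈ (Finset.Ico a b).powersetCard j, ∏ i ∈ s, p i

/-- The `m × m` symmetric tridiagonal matrix with 1-indexed entries
`M[i,i] = p_i + p_{i+1}`, `M[i,i+1] = M[i+1,i] = -p_{i+1}`. -/
def triM (p : ℕ → ℤ) (m : ℕ) : Matrix (Fin m) (Fin m) ℤ :=
  Matrix.of fun t u =>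
    if (t : ℕ) = (u : ℕ) then p t + p ((t : ℕ) + 1)
    else if (t : ℕ) + 1 = (u : ℕ) then -p u
    else if (u : ℕ) + 1 = (t : ℕ) then -p t
    else 0

open Finset

variable {α β : Type*} [Fintype α] [DecidableEq α] [Fintype β] [DecidableEq β]

noncomputable def sgn (x : ℝ) : ℤ := if 0 < x then 1 else if x < 0 then -1 else 0

def hasSig (A : Matrix α α ℝ) (s : ℤ) : Prop :=
  ∃ (V : Matrix α α ℝ) (μ : α → ℝ), IsUnit V.det ∧ A = Vᵀ * Matrix.diagonal μ * V ∧
    s = ((univ.filter fun i => 0 < μ i).card : ℤ) - ((univ.filter fun i => μ i < 0).card : ℤ)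

omit [Fintype α] [DecidableEq α] in
lemma extend_aux (μ : α → ℝ) :
    IsLinearMap ℝ (fun c : {i // 0 < μ i} → ℝ => fun i => if h : 0 < μ i then c ⟨i, h⟩ else (0:ℝ)) := by
  constructor
  · intro c c'; funext i; by_cases h : 0 < μ i <;> simp [h]
  · intro r c; funext i; by_cases h : 0 < μ i <;> simp [h]

lemma quad_eval (U : Matrix α α ℝ) (ν : α → ℝ) (x : α → ℝ) :
    x ⬝ᵥ ((Uᵀ * Matrix.diagonal ν * U) *ᵥ x) = ∑ i, ν i * (U *ᵥ x) i ^ 2 := by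
  rw [← mulVec_mulVec, ← mulVec_mulVec, dotProduct_mulVec, vecMul_transpose]
  simp only [dotProduct, mulVec_diagonal]
  exact Finset.sum_congr rfl fun i _ => by ring

/-- One inequality of Sylvester's law of inertia. -/
lemma syl_le {V W : Matrix α α ℝ} {μ lam : α → ℝ}
    (hV : IsUnit V.det) (hW : IsUnit W.det)
    (h : Vᵀ * Matrix.diagonal μ * V = Wᵀ * Matrix.diagonal lam * W) :
    (univ.filter fun i => 0 < μ i).card ≤ (univ.filter fun i => 0 < lam i).card := by
  by_contra hlt
  push_neg at hlt
  set ext : ({i // 0 < μ i} → ℝ) →ₗ[ℝ] (α → ℝ) := IsLinearMap.mk' _ (extend_aux μ) with hext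
  set F : ({i // 0 < μ i} → ℝ) →ₗ[ℝ] ({i // 0 < lam i} → ℝ) :=
    (LinearMap.funLeft ℝ ℝ Subtype.val) ∘ₗ W.mulVecLin ∘ₗ V⁻¹.mulVecLin ∘ₗ ext with hF
  have hnotinj : ¬ Function.Injective F := by
    intro hinj
    have := LinearMap.finrank_le_finrank_of_injective hinj
    simp only [Module.finrank_pi, Fintype.card_subtype] at this
    omega
  have hker : ∃ c, c ≠ 0 ∧ F c = 0 := by
    by_contra hc
    push_neg at hc
    exact hnotinj ((injective_iff_map_eq_zero' F).2 fun c =>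
      ⟨fun h0 => by_contra fun hne => (hc c hne) h0, fun h0 => by rw [h0, map_zero]⟩)
  obtain ⟨c, hc0, hFc⟩ := hker
  set x : α → ℝ := V⁻¹ *ᵥ (ext c) with hx
  have hVx : V *ᵥ x = ext c := by
    rw [hx, mulVec_mulVec, mul_nonsing_inv _ hV, one_mulVec]
  have e1 : x ⬝ᵥ ((Vᵀ * Matrix.diagonal μ * V) *ᵥ x) = ∑ i, μ i * (ext c) i ^ 2 := by
    rw [quad_eval, hVx]
  have e2 : x ⬝ᵥ ((Wᵀ * Matrix.diagonal lam * W) *ᵥ x) = ∑ i, lam i * (W *ᵥ x) i ^ 2 :=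
    quad_eval _ _ _
  -- positivity of e1's RHS
  obtain ⟨j, hj⟩ : ∃ j, c j ≠ 0 := Function.ne_iff.1 hc0
  have hpos : 0 < ∑ i, μ i * (ext c) i ^ 2 := by
    have hterm : ∀ i : α, 0 ≤ μ i * (ext c) i ^ 2 := by
      intro i
      by_cases h : 0 < μ i
      · positivity
      · have : (ext c) i = 0 := by simp [hext, extend_aux, IsLinearMap.mk'_apply, h]
        rw [this]; simp
    apply Finset.sum_pos' (fun i _ => hterm i)
    refine ⟨j.1, Finset.mem_univ _, ?_⟩
    have : (ext c) j.1 = c j := by simp [hext, j.2]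
    rw [this]
    have := j.2
    positivity
  have hnonpos : ∑ i, lam i * (W *ᵥ x) i ^ 2 ≤ 0 := by
    apply Finset.sum_nonpos
    intro i _
    by_cases h : 0 < lam i
    · have : (W *ᵥ x) i = 0 := by
        have := congrFun hFc ⟨i, h⟩
        simpa [hF, hx] using this
      rw [this]; simp
    · push_neg at h
      have : (W *ᵥ x) i ^ 2 ≥ 0 := sq_nonneg _
      exact mul_nonpos_of_nonpos_of_nonneg h (sq_nonneg _)
  rw [h] at e1
  rw [e2] at e1
  linarith

lemma syl_eq {V W : Matrix α α ℝ} {μ lam : α → ℝ}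
    (hV : IsUnit V.det) (hW : IsUnit W.det)
    (h : Vᵀ * Matrix.diagonal μ * V = Wᵀ * Matrix.diagonal lam * W) :
    ((univ.filter fun i => 0 < μ i).card : ℤ) - ((univ.filter fun i => μ i < 0).card : ℤ)
    = ((univ.filter fun i => 0 < lam i).card : ℤ) - ((univ.filter fun i => lam i < 0).card : ℤ) := by
  have h1 := syl_le hV hW h
  have h2 := syl_le hW hV h.symm
  have hneg : Vᵀ * Matrix.diagonal (fun i => -μ i) * V = Wᵀ * Matrix.diagonal (fun i => -lam i) * W := by
    have : ∀ (M : Matrix α α ℝ) (ν : α → ℝ), Mᵀ * Matrix.diagonal (fun i => -ν i) * M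
        = -(Mᵀ * Matrix.diagonal ν * M) := by
      intro M ν
      have : Matrix.diagonal (fun i => -ν i) = -Matrix.diagonal ν := by
        ext i j; by_cases hij : i = j <;> simp [Matrix.diagonal, hij]
      rw [this, Matrix.mul_neg, Matrix.neg_mul]
    rw [this, this, h]
  have h3 := syl_le hV hW hneg
  have h4 := syl_le hW hV hneg.symm
  have e1 : (univ.filter fun i => 0 < -μ i) = (univ.filter fun i => μ i < 0) := by
    apply Finset.filter_congr; intro i _; simp
  have e2 : (univ.filter fun i => 0 < -lam i) = (univ.filter fun i => lam i < 0) := by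
    apply Finset.filter_congr; intro i _; simp
  rw [e1, e2] at h3 h4
  omega

lemma hasSig_unique {A : Matrix α α ℝ} {s t : ℤ} (hs : hasSig A s) (ht : hasSig A t) : s = t := by
  obtain ⟨V, μ, hV, rfl, hsv⟩ := hs
  obtain ⟨W, lam, hW, hAW, htw⟩ := ht
  rw [hsv, htw]
  exact syl_eq hV hW hAW

lemma hasSig_congr {A E : Matrix α α ℝ} {s : ℤ} (hE : IsUnit E.det) (h : hasSig A s) :
    hasSig (Eᵀ * A * E) s := by
  obtain ⟨V, μ, hV, rfl, hs⟩ := h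
  refine ⟨V * E, μ, ?_, ?_, hs⟩
  · rw [Matrix.det_mul]; exact hV.mul hE
  · rw [Matrix.transpose_mul]; noncomm_ring

lemma card_filter_comp (P : ℝ → Prop) [DecidablePred P] (μ : α → ℝ) (e : β ≃ α) :
    (univ.filter fun i : β => P (μ (e i))).card = (univ.filter fun i : α => P (μ i)).card := by
  apply Finset.card_bij (fun a _ => e a)
  · intro a ha; simp only [mem_filter, mem_univ, true_and] at *; exact ha
  · intro a _ b _ hab; exact e.injective hab
  · intro b hb; refine ⟨e.symm b, ?_, by simp⟩
    simp only [mem_filter, mem_univ, true_and, Equiv.apply_symm_apply] at *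
    exact hb

lemma hasSig_submatrix {A : Matrix α α ℝ} {s : ℤ} (e : β ≃ α) (h : hasSig A s) :
    hasSig (A.submatrix e e) s := by
  obtain ⟨V, μ, hV, rfl, hs⟩ := h
  refine ⟨V.submatrix e e, μ ∘ e, ?_, ?_, ?_⟩
  · rwa [Matrix.det_submatrix_equiv_self]
  · rw [← Matrix.submatrix_mul_equiv (Vᵀ * Matrix.diagonal μ) V _ e,
      ← Matrix.submatrix_mul_equiv (Vᵀ) (Matrix.diagonal μ) _ e]
    rw [Matrix.submatrix_diagonal_equiv, Matrix.transpose_submatrix]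
  · rw [hs]
    have a1 := card_filter_comp (0 < ·) μ e
    have a2 := card_filter_comp (· < 0) μ e
    simp only [Function.comp]
    omega

lemma card_filter_sum (P : ℝ → Prop) [DecidablePred P] (μ : α → ℝ) (lam : β → ℝ) :
    (univ.filter fun i : α ⊕ β => P (Sum.elim μ lam i)).card
      = (univ.filter fun i : α => P (μ i)).card + (univ.filter fun i : β => P (lam i)).card := by
  rw [← Fintype.card_subtype, ← Fintype.card_subtype, ← Fintype.card_subtype]
  rw [Fintype.card_congr (Equiv.subtypeSum (p := fun i : α ⊕ β => P (Sum.elim μ lam i)))]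
  simp [Fintype.card_sum]
  rw [← Fintype.card_sum]
  exact Fintype.card_congr' rfl

lemma hasSig_fromBlocks {A : Matrix α α ℝ} {B : Matrix β β ℝ} {s t : ℤ}
    (hA : hasSig A s) (hB : hasSig B t) :
    hasSig (Matrix.fromBlocks A 0 0 B) (s + t) := by
  obtain ⟨V, μ, hV, rfl, hs⟩ := hA
  obtain ⟨W, lam, hW, rfl, ht⟩ := hB
  refine ⟨Matrix.fromBlocks V 0 0 W, Sum.elim μ lam, ?_, ?_, ?_⟩
  · rw [Matrix.det_fromBlocks_zero₂₁]; exact hV.mul hW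
  · rw [← Matrix.fromBlocks_diagonal, Matrix.fromBlocks_transpose, Matrix.fromBlocks_multiply,
      Matrix.fromBlocks_multiply]
    simp
  · rw [hs, ht, card_filter_sum (0 < ·), card_filter_sum (· < 0)]
    push_cast
    ring

lemma hasSig_herm {N : ℕ} (A : Matrix (Fin N) (Fin N) ℝ) (hA : A.IsHermitian) :
    hasSig A (((univ.filter fun i => 0 < hA.eigenvalues i).card : ℤ)
      - ((univ.filter fun i => hA.eigenvalues i < 0).card : ℤ)) := by
  have hst := hA.spectral_theorem
  set U : Matrix (Fin N) (Fin N) ℝ := (Matrix.IsHermitian.eigenvectorUnitary hA : Matrix (Fin N) (Fin N) ℝ) with hU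
  refine ⟨star U, hA.eigenvalues, ?_, ?_, rfl⟩
  · have h1 : U * star U = 1 := (Matrix.mem_unitaryGroup_iff).mp (Matrix.IsHermitian.eigenvectorUnitary hA).2
    have h2 := congrArg Matrix.det h1
    rw [Matrix.det_mul, Matrix.det_one, mul_comm] at h2
    exact IsUnit.of_mul_eq_one _ h2
  · have hT : (star U)ᵀ = U := by
      have : star U = Uᵀ := rfl
      rw [this, Matrix.transpose_transpose]
    rw [hT]
    rw [Unitary.conjStarAlgAut_apply] at hst
    exact hst

lemma card_filter_fin1 (P : Fin 1 → Prop) [DecidablePred P] :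
    (univ.filter P).card = (if P 0 then 1 else 0) := by
  have h : (univ : Finset (Fin 1)) = {0} := by decide
  rw [h, Finset.filter_singleton]
  split_ifs <;> simp

lemma card_filter_fin2 (P : Fin 2 → Prop) [DecidablePred P] :
    (univ.filter P).card = (if P 0 then 1 else 0) + (if P 1 then 1 else 0) := by
  have h : (univ : Finset (Fin 2)) = {0, 1} := by decide
  rw [h, Finset.filter_insert, Finset.filter_singleton]
  split_ifs <;> simp_all [Finset.card_insert_of_notMem]

lemma count_pm {x y : ℝ} (h : x * y < 0) :
    (0 : ℤ) = ((univ.filter fun i => 0 < ![x, y] i).card : ℤ)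
      - ((univ.filter fun i => ![x, y] i < 0).card : ℤ) := by
  rw [card_filter_fin2, card_filter_fin2]
  simp only [Matrix.cons_val_zero, Matrix.cons_val_one, Matrix.head_cons]
  rcases mul_neg_iff.1 h with ⟨h1, h2⟩ | ⟨h1, h2⟩ <;> simp [h1, h2, not_lt_of_gt h1, not_lt_of_gt h2]

lemma hasSig_one (A : Matrix (Fin 1) (Fin 1) ℝ) : hasSig A (sgn (A 0 0)) := by
  refine ⟨1, fun _ => A 0 0, by simp, ?_, ?_⟩
  · ext i j
    fin_cases i; fin_cases j
    simp [Matrix.diagonal]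
  · rw [card_filter_fin1, card_filter_fin1]
    unfold sgn
    split_ifs <;> simp_all <;> linarith

lemma hasSig_two {b c : ℝ} (hb : b ≠ 0) : hasSig (!![0, b; b, c]) 0 := by
  have hb2 : 0 < b ^ 2 := by rcases lt_or_gt_of_ne hb with h | h <;> nlinarith
  by_cases hc : c = 0
  · subst hc
    refine ⟨!![1, 1; 1, -1], ![b/2, -b/2], ?_, ?_, ?_⟩
    · rw [Matrix.det_fin_two_of]
      exact isUnit_iff_ne_zero.2 (by norm_num)
    · ext i j
      fin_cases i <;> fin_cases j <;>
        simp [Matrix.mul_apply, Fin.sum_univ_two, Matrix.diagonal, Matrix.transpose_apply,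
          Matrix.vecHead, Matrix.vecTail] <;> ring
    · exact count_pm (by nlinarith)
  · refine ⟨!![b/c, 1; 1, 0], ![c, -b^2/c], ?_, ?_, ?_⟩
    · rw [Matrix.det_fin_two_of]
      exact isUnit_iff_ne_zero.2 (by norm_num)
    · ext i j
      fin_cases i <;> fin_cases j <;>
        simp [Matrix.mul_apply, Fin.sum_univ_two, Matrix.diagonal, Matrix.transpose_apply,
          Matrix.vecHead, Matrix.vecTail] <;> field_simp <;> ring
    · refine count_pm ?_
      have : c * (-b^2/c) = -b^2 := by field_simp
      rw [this]; nlinarith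

lemma schur_decomp {α β : Type*} [Fintype α] [DecidableEq α] [Fintype β] [DecidableEq β]
    (A : Matrix α α ℝ) (B : Matrix α β ℝ) (D : Matrix β β ℝ)
    (hA : IsUnit A.det) (hAs : Aᵀ = A) :
    Matrix.fromBlocks A B Bᵀ D =
      (Matrix.fromBlocks 1 (A⁻¹*B) 0 1)ᵀ * Matrix.fromBlocks A 0 0 (D - Bᵀ*A⁻¹*B)
        * (Matrix.fromBlocks 1 (A⁻¹*B) 0 1) := by
  have hti : (A⁻¹*B)ᵀ = Bᵀ * A⁻¹ := by
    rw [Matrix.transpose_mul, Matrix.transpose_nonsing_inv, hAs]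
  have h1 : A * (A⁻¹ * B) = B := by rw [← Matrix.mul_assoc, Matrix.mul_nonsing_inv _ hA, Matrix.one_mul]
  have h2 : Bᵀ * A⁻¹ * A = Bᵀ := by rw [Matrix.mul_assoc, Matrix.nonsing_inv_mul _ hA, Matrix.mul_one]
  simp only [Matrix.fromBlocks_transpose, Matrix.fromBlocks_multiply, Matrix.transpose_one,
    Matrix.transpose_zero, Matrix.mul_one, Matrix.one_mul, Matrix.mul_zero, Matrix.zero_mul,
    add_zero, zero_add, hti, h1, h2]
  rw [show Bᵀ * (A⁻¹ * B) + (D - Bᵀ * A⁻¹ * B) = D from by rw [← Matrix.mul_assoc]; abel]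

def tri (a b : ℕ → ℝ) (m : ℕ) : Matrix (Fin m) (Fin m) ℝ :=
  Matrix.of fun t u =>
    if (t : ℕ) = (u : ℕ) then a (t : ℕ)
    else if (t : ℕ) + 1 = (u : ℕ) then b (t : ℕ)
    else if (u : ℕ) + 1 = (t : ℕ) then b (u : ℕ)
    else 0

noncomputable def dseq (a b : ℕ → ℝ) : ℕ → ℝ
  | 0 => 1
  | 1 => a 0
  | (k+2) => a (k+1) * dseq a b (k+1) - (b k)^2 * dseq a b k

def eqv1 (k : ℕ) : Fin 1 ⊕ Fin k ≃ Fin (k+1) := finSumFinEquiv.trans (finCongr (Nat.add_comm 1 k))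
def eqv2 (k : ℕ) : Fin 2 ⊕ Fin k ≃ Fin (k+2) := finSumFinEquiv.trans (finCongr (Nat.add_comm 2 k))

@[simp] lemma eqv1_inl (k : ℕ) (i : Fin 1) : ((eqv1 k) (Sum.inl i) : ℕ) = (i : ℕ) := by
  simp [eqv1]
@[simp] lemma eqv1_inr (k : ℕ) (j : Fin k) : ((eqv1 k) (Sum.inr j) : ℕ) = 1 + (j : ℕ) := by
  simp [eqv1]; omega
@[simp] lemma eqv2_inl (k : ℕ) (i : Fin 2) : ((eqv2 k) (Sum.inl i) : ℕ) = (i : ℕ) := by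
  simp [eqv2]
@[simp] lemma eqv2_inr (k : ℕ) (j : Fin k) : ((eqv2 k) (Sum.inr j) : ℕ) = 2 + (j : ℕ) := by
  simp [eqv2]; omega

/-- first row block of `tri` (size 1) -/
def rblk1 (b : ℕ → ℝ) (k : ℕ) : Matrix (Fin 1) (Fin k) ℝ :=
  Matrix.of fun _ j => if (j : ℕ) = 0 then b 0 else 0

/-- first rows block of `tri` (size 2) -/
def rblk2 (b : ℕ → ℝ) (k : ℕ) : Matrix (Fin 2) (Fin k) ℝ :=
  Matrix.of fun i j => if (i : ℕ) = 1 ∧ (j : ℕ) = 0 then b 1 else 0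

lemma blk1 (a b : ℕ → ℝ) (k : ℕ) :
    (tri a b (k+1)).submatrix (eqv1 k) (eqv1 k) =
      Matrix.fromBlocks !![a 0] (rblk1 b k) (rblk1 b k)ᵀ
        (tri (fun j => a (j+1)) (fun j => b (j+1)) k) := by
  ext i j
  rcases i with i | i <;> rcases j with j | j <;>
    · have hi := Fin.isLt i
      have hj := Fin.isLt j
      simp only [Matrix.submatrix_apply, tri, rblk1, Matrix.fromBlocks, Matrix.of_apply,
        Sum.elim_inl, Sum.elim_inr, eqv1_inl, eqv1_inr, Matrix.transpose_apply,
        Matrix.cons_val', Matrix.cons_val_zero, Matrix.empty_val', Matrix.cons_val_fin_one]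
      split_ifs <;> first | rfl | omega | (congr 1; omega) | (exfalso; omega)

lemma blk2 (a b : ℕ → ℝ) (k : ℕ) :
    (tri a b (k+2)).submatrix (eqv2 k) (eqv2 k) =
      Matrix.fromBlocks !![a 0, b 0; b 0, a 1] (rblk2 b k) (rblk2 b k)ᵀ
        (tri (fun j => a (j+2)) (fun j => b (j+2)) k) := by
  ext i j
  rcases i with i | i <;> rcases j with j | j
  · fin_cases i <;> fin_cases j <;>
      simp [tri, Matrix.fromBlocks]
  · have hi := Fin.isLt i
    have hj := Fin.isLt j
    simp only [Matrix.submatrix_apply, tri, rblk2, Matrix.fromBlocks, Matrix.of_apply,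
      Sum.elim_inl, Sum.elim_inr, eqv2_inl, eqv2_inr]
    split_ifs <;> first | rfl | omega | (congr 1; omega)
  · have hi := Fin.isLt i
    have hj := Fin.isLt j
    simp only [Matrix.submatrix_apply, tri, rblk2, Matrix.fromBlocks, Matrix.of_apply,
      Sum.elim_inl, Sum.elim_inr, eqv2_inl, eqv2_inr, Matrix.transpose_apply]
    split_ifs <;> first | rfl | omega | (congr 1; omega)
  · have hi := Fin.isLt i
    have hj := Fin.isLt j
    simp only [Matrix.submatrix_apply, tri, rblk2, Matrix.fromBlocks, Matrix.of_apply,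
      Sum.elim_inl, Sum.elim_inr, eqv2_inl, eqv2_inr]
    split_ifs <;> first | rfl | omega | (congr 1; omega) | (exfalso; omega)


lemma hasSig_of_submatrix {α β : Type*} [Fintype α] [DecidableEq α] [Fintype β] [DecidableEq β]
    {A : Matrix α α ℝ} {s : ℤ} (e : β ≃ α) (h : hasSig (A.submatrix e e) s) : hasSig A s := by
  have h2 := hasSig_submatrix e.symm h
  rw [Matrix.submatrix_submatrix] at h2
  simpa [Equiv.self_comp_symm] using h2

lemma inv_one_blk {x : ℝ} (hx : x ≠ 0) : (!![x] : Matrix (Fin 1) (Fin 1) ℝ)⁻¹ = !![1/x] := by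
  apply Matrix.inv_eq_right_inv
  ext i j
  fin_cases i; fin_cases j
  simp [Matrix.mul_apply, hx]

lemma inv_two_blk {x y : ℝ} (hx : x ≠ 0) :
    (!![0, x; x, y] : Matrix (Fin 2) (Fin 2) ℝ)⁻¹ = !![-y/x^2, 1/x; 1/x, 0] := by
  apply Matrix.inv_eq_right_inv
  ext i j
  fin_cases i <;> fin_cases j <;>
    simp [Matrix.mul_apply, Fin.sum_univ_two] <;> field_simp <;> ring

lemma corr1 (a b : ℕ → ℝ) (k : ℕ) (ha : a 0 ≠ 0) :
    tri (fun j => a (j+1)) (fun j => b (j+1)) k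
      - (rblk1 b k)ᵀ * (!![a 0] : Matrix (Fin 1) (Fin 1) ℝ)⁻¹ * rblk1 b k
    = tri (fun j => if j = 0 then a 1 - b 0^2 / a 0 else a (j+1)) (fun j => b (j+1)) k := by
  rw [inv_one_blk ha]
  ext i j
  simp only [Matrix.sub_apply, Matrix.mul_apply, Fin.sum_univ_one, tri, rblk1,
    Matrix.of_apply, Matrix.transpose_apply, Matrix.cons_val_zero, Matrix.cons_val',
    Matrix.empty_val', Matrix.cons_val_fin_one]
  split_ifs <;> first | rfl | omega | (exfalso; omega) | (simp_all; try field_simp; try ring)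

lemma corr2 (a b : ℕ → ℝ) (k : ℕ) (hb : b 0 ≠ 0) :
    tri (fun j => a (j+2)) (fun j => b (j+2)) k
      - (rblk2 b k)ᵀ * (!![0, b 0; b 0, a 1] : Matrix (Fin 2) (Fin 2) ℝ)⁻¹ * rblk2 b k
    = tri (fun j => a (j+2)) (fun j => b (j+2)) k := by
  rw [inv_two_blk hb]
  have hz : (rblk2 b k)ᵀ * (!![-a 1/(b 0)^2, 1/(b 0); 1/(b 0), 0] : Matrix (Fin 2) (Fin 2) ℝ)
      * rblk2 b k = 0 := by
    ext i j
    simp only [Matrix.mul_apply, Fin.sum_univ_two, rblk2, Matrix.of_apply,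
      Matrix.transpose_apply, Matrix.zero_apply]
    norm_num
  rw [hz, sub_zero]

lemma step1 (a b : ℕ → ℝ) (k : ℕ) (ha : a 0 ≠ 0) {s : ℤ}
    (h : hasSig (tri (fun j => if j = 0 then a 1 - b 0^2 / a 0 else a (j+1))
      (fun j => b (j+1)) k) s) :
    hasSig (tri a b (k+1)) (sgn (a 0) + s) := by
  apply hasSig_of_submatrix (eqv1 k)
  rw [blk1]
  have hunit : IsUnit (!![a 0] : Matrix (Fin 1) (Fin 1) ℝ).det := by
    rw [Matrix.det_fin_one_of]
    exact isUnit_iff_ne_zero.2 ha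
  have hsym : (!![a 0] : Matrix (Fin 1) (Fin 1) ℝ)ᵀ = !![a 0] := by
    ext i j; fin_cases i; fin_cases j; rfl
  rw [schur_decomp _ _ _ hunit hsym]
  apply hasSig_congr
  · rw [Matrix.det_fromBlocks_zero₂₁]; simp
  rw [corr1 a b k ha]
  have h1 : hasSig (!![a 0] : Matrix (Fin 1) (Fin 1) ℝ) (sgn (a 0)) := by
    have := hasSig_one (!![a 0] : Matrix (Fin 1) (Fin 1) ℝ)
    simpa using this
  exact hasSig_fromBlocks h1 h

lemma step2 (a b : ℕ → ℝ) (k : ℕ) (ha : a 0 = 0) (hb : b 0 ≠ 0) {s : ℤ}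
    (h : hasSig (tri (fun j => a (j+2)) (fun j => b (j+2)) k) s) :
    hasSig (tri a b (k+2)) s := by
  apply hasSig_of_submatrix (eqv2 k)
  rw [blk2, ha]
  have hunit : IsUnit (!![0, b 0; b 0, a 1] : Matrix (Fin 2) (Fin 2) ℝ).det := by
    rw [Matrix.det_fin_two_of]
    exact isUnit_iff_ne_zero.2 (by simp; intro h0; exact absurd h0 hb)
  have hsym : (!![0, b 0; b 0, a 1] : Matrix (Fin 2) (Fin 2) ℝ)ᵀ = !![0, b 0; b 0, a 1] := by
    ext i j; fin_cases i <;> fin_cases j <;> rfl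
  rw [schur_decomp _ _ _ hunit hsym]
  have hL : IsUnit (Matrix.fromBlocks (1 : Matrix (Fin 2) (Fin 2) ℝ)
      ((!![0, b 0; b 0, a 1] : Matrix (Fin 2) (Fin 2) ℝ)⁻¹ * rblk2 b k) 0 1).det := by
    rw [Matrix.det_fromBlocks_zero₂₁]; simp
  apply hasSig_congr hL
  rw [corr2 a b k hb]
  have h2 : hasSig (!![0, b 0; b 0, a 1] : Matrix (Fin 2) (Fin 2) ℝ) 0 := hasSig_two hb
  have := hasSig_fromBlocks h2 h
  simpa using this

lemma sgn_mul_pos {c : ℝ} (hc : 0 < c) (x : ℝ) : sgn (x * c) = sgn x := by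
  have hp : 0 < x * c ↔ 0 < x := ⟨fun h => by nlinarith, fun h => mul_pos h hc⟩
  have hn : x * c < 0 ↔ x < 0 := ⟨fun h => by nlinarith, fun h => mul_neg_of_neg_of_pos h hc⟩
  unfold sgn
  simp only [hp, hn]

lemma dshift1 (a b : ℕ → ℝ) (ha : a 0 ≠ 0) :
    ∀ k, dseq (fun j => if j = 0 then a 1 - b 0^2 / a 0 else a (j+1)) (fun j => b (j+1)) k
      = dseq a b (k+1) / a 0 := by
  intro k
  induction k using Nat.twoStepInduction with
  | zero => simp [dseq]; try field_simp
  | one => simp only [dseq]; rw [if_pos trivial]; field_simp; try ring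
  | more n ih1 ih2 =>
    show dseq _ _ (n+2) = _
    rw [dseq, ih1, ih2]
    show (if n + 1 = 0 then _ else a (n+2)) * _ - (b (n+1))^2 * _ = _
    rw [if_neg (Nat.succ_ne_zero n)]
    rw [show dseq a b (n+2+1) = a (n+2) * dseq a b (n+2) - b (n+1)^2 * dseq a b (n+1) from rfl]
    field_simp
    try ring

lemma dshift2 (a b : ℕ → ℝ) (ha : a 0 = 0) :
    ∀ k, dseq (fun j => a (j+2)) (fun j => b (j+2)) k * (-(b 0^2)) = dseq a b (k+2) := by
  intro k
  induction k using Nat.twoStepInduction with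
  | zero =>
    show (1:ℝ) * _ = a 1 * dseq a b 1 - b 0^2 * dseq a b 0
    simp [dseq, ha]
  | one =>
    show a 2 * _ = a 2 * dseq a b 2 - b 1^2 * dseq a b 1
    rw [show dseq a b 2 = a 1 * dseq a b 1 - b 0^2 * dseq a b 0 from rfl]
    simp [dseq, ha]
    try ring
  | more n ih1 ih2 =>
    show (a (n+1+2) * dseq _ _ (n+1) - (b (n+2))^2 * dseq _ _ n) * _ = dseq a b (n+2+2)
    rw [show dseq a b (n+2+2) = a (n+3) * dseq a b (n+3) - b (n+2)^2 * dseq a b (n+2) from rfl,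
      ← ih1, ← ih2]
    ring

lemma main : ∀ m (a b : ℕ → ℝ), (∀ k, k + 2 ≤ m → b k ≠ 0) →
    hasSig (tri a b m) (∑ k ∈ Finset.range m, sgn (dseq a b k * dseq a b (k+1))) := by
  intro m
  induction m using Nat.strong_induction_on with
  | _ m IH =>
  match m with
  | 0 =>
    intro a b _
    refine ⟨1, fun _ => 0, by simp, ?_, by simp⟩
    ext i j
    exact i.elim0
  | 1 =>
    intro a b _
    have h := hasSig_one (tri a b 1)
    have he : (tri a b 1) 0 0 = a 0 := by simp [tri]
    rw [he] at h
    simpa [dseq] using h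
  | (k+2) =>
    intro a b hb
    have hb0 : b 0 ≠ 0 := hb 0 (by omega)
    by_cases ha : a 0 = 0
    · have ih := IH k (by omega) (fun j => a (j+2)) (fun j => b (j+2))
        (fun j hj => hb (j+2) (by omega))
      have h := step2 a b k ha hb0 ih
      convert h using 1
      rw [Finset.sum_range_succ', Finset.sum_range_succ']
      have hb2 : (0:ℝ) < (b 0 ^ 2) ^ 2 := by
        have : (0:ℝ) < b 0 ^ 2 := by rcases lt_or_gt_of_ne hb0 with h' | h' <;> nlinarith
        positivity
      have e0 : sgn (dseq a b 0 * dseq a b (0+1)) = 0 := by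
        show sgn ((1:ℝ) * a 0) = 0
        rw [one_mul, ha]
        simp [sgn]
      have e1 : sgn (dseq a b (0+1) * dseq a b (0+1+1)) = 0 := by
        have hz : dseq a b (0+1) = 0 := ha
        rw [hz, zero_mul]
        simp [sgn]
      rw [e0, e1, add_zero, add_zero]
      apply Finset.sum_congr rfl
      intro i _
      have h3 : dseq a b (i+1+1) = dseq (fun j => a (j+2)) (fun j => b (j+2)) i * (-(b 0^2)) :=
        (dshift2 a b ha i).symm
      have h4 : dseq a b (i+1+1+1)
          = dseq (fun j => a (j+2)) (fun j => b (j+2)) (i+1) * (-(b 0^2)) :=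
        (dshift2 a b ha (i+1)).symm
      rw [h3, h4]
      rw [show dseq (fun j => a (j+2)) (fun j => b (j+2)) i * (-(b 0^2))
          * (dseq (fun j => a (j+2)) (fun j => b (j+2)) (i+1) * (-(b 0^2)))
          = dseq (fun j => a (j+2)) (fun j => b (j+2)) i
            * dseq (fun j => a (j+2)) (fun j => b (j+2)) (i+1) * (b 0^2)^2 from by ring]
      rw [sgn_mul_pos hb2]
    · have ih := IH (k+1) (by omega)
        (fun j => if j = 0 then a 1 - b 0^2 / a 0 else a (j+1)) (fun j => b (j+1))
        (fun j hj => hb (j+1) (by omega))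
      have h := step1 a b (k+1) ha ih
      convert h using 1
      rw [Finset.sum_range_succ']
      rw [add_comm]
      congr 1
      · show sgn (dseq a b 0 * dseq a b (0+1)) = sgn (a 0)
        show sgn ((1:ℝ) * a 0) = sgn (a 0)
        rw [one_mul]
      · apply Finset.sum_congr rfl
        intro i _
        have h3 : dseq a b (i+1) = dseq (fun j => if j = 0 then a 1 - b 0^2 / a 0 else a (j+1))
            (fun j => b (j+1)) i * a 0 := by
          rw [dshift1 a b ha i]
          field_simp
        have h4 : dseq a b (i+1+1) = dseq (fun j => if j = 0 then a 1 - b 0^2 / a 0 else a (j+1))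
            (fun j => b (j+1)) (i+1) * a 0 := by
          rw [dshift1 a b ha (i+1)]
          field_simp
        rw [h3, h4]
        have ha2 : (0:ℝ) < a 0 ^ 2 := by rcases lt_or_gt_of_ne ha with h' | h' <;> nlinarith
        rw [show dseq (fun j => if j = 0 then a 1 - b 0^2 / a 0 else a (j+1)) (fun j => b (j+1)) i
            * a 0 * (dseq (fun j => if j = 0 then a 1 - b 0^2 / a 0 else a (j+1))
              (fun j => b (j+1)) (i+1) * a 0)
            = dseq (fun j => if j = 0 then a 1 - b 0^2 / a 0 else a (j+1)) (fun j => b (j+1)) i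
            * dseq (fun j => if j = 0 then a 1 - b 0^2 / a 0 else a (j+1)) (fun j => b (j+1)) (i+1)
            * a 0 ^2 from by ring]
        rw [sgn_mul_pos ha2]
  termination_by m => m


lemma esym_zero (p : ℕ → ℤ) (b : ℕ) : esym p 0 b 0 = 1 := by
  simp [esym]

lemma esym_top (p : ℕ → ℤ) (b : ℕ) : esym p 0 b b = ∏ i ∈ Finset.range b, p i := by
  unfold esym
  have h : (Finset.Ico 0 b).card = b := by simp
  have hp := Finset.powersetCard_self (Finset.Ico 0 b)
  rw [h] at hp
  rw [hp, Finset.sum_singleton, Finset.range_eq_Ico]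

lemma Ico_succ_ins (b : ℕ) : Finset.Ico 0 (b+1) = insert b (Finset.Ico 0 b) := by
  ext x
  simp only [Finset.mem_Ico, Finset.mem_insert]
  omega

lemma esym_pascal (p : ℕ → ℤ) (b j : ℕ) :
    esym p 0 (b+1) (j+1) = esym p 0 b (j+1) + p b * esym p 0 b j := by
  unfold esym
  rw [Ico_succ_ins, Finset.powersetCard_succ_insert (by simp)]
  have hdisj : Disjoint ((Finset.Ico 0 b).powersetCard (j+1))
      (((Finset.Ico 0 b).powersetCard j).image (insert b)) := by
    rw [Finset.disjoint_left]
    intro s hs1 hs2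
    obtain ⟨t, ht, rfl⟩ := Finset.mem_image.1 hs2
    have hsub := (Finset.mem_powersetCard.1 hs1).1
    have hb := hsub (Finset.mem_insert_self b t)
    simp at hb
  rw [Finset.sum_union hdisj]
  congr 1
  have hni : ∀ s ∈ (Finset.Ico 0 b).powersetCard j, b ∉ s := by
    intro s hs
    have := (Finset.mem_powersetCard.1 hs).1
    intro hc
    have := this hc
    simp at this
  rw [Finset.sum_image (by
    intro x hx y hy hxy
    have hx' := hni x hx
    have hy' := hni y hy
    have : (insert b x).erase b = (insert b y).erase b := by rw [hxy]
    rwa [Finset.erase_insert hx', Finset.erase_insert hy'] at this)]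
  rw [Finset.mul_sum]
  apply Finset.sum_congr rfl
  intro s hs
  rw [Finset.prod_insert (hni s hs)]

lemma esym_rec (p : ℕ → ℤ) (k : ℕ) :
    esym p 0 (k+3) (k+2)
      = (p (k+1) + p (k+2)) * esym p 0 (k+2) (k+1) - (p (k+1))^2 * esym p 0 (k+1) k := by
  have h1 : esym p 0 (k+3) (k+2)
      = esym p 0 (k+2) (k+2) + p (k+2) * esym p 0 (k+2) (k+1) := esym_pascal p (k+2) (k+1)
  have h2 : esym p 0 (k+2) (k+1)
      = esym p 0 (k+1) (k+1) + p (k+1) * esym p 0 (k+1) k := esym_pascal p (k+1) k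
  have h3 : esym p 0 (k+2) (k+2) = p (k+1) * esym p 0 (k+1) (k+1) := by
    rw [esym_top, esym_top, Finset.prod_range_succ]
    ring
  rw [h1, h3, h2]
  ring

lemma dseq_cast (p : ℕ → ℤ) :
    ∀ k, dseq (fun j => ((p j : ℝ) + (p (j+1) : ℝ))) (fun j => -(p (j+1) : ℝ)) k
      = ((esym p 0 (k+1) k : ℤ) : ℝ) := by
  intro k
  induction k using Nat.twoStepInduction with
  | zero =>
    show (1:ℝ) = _
    rw [esym_zero]
    norm_num
  | one =>
    show ((p 0 : ℝ) + (p 1 : ℝ)) = _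
    have h : esym p 0 2 1 = p 0 + p 1 := by
      have h1 : esym p 0 2 1 = esym p 0 1 1 + p 1 * esym p 0 1 0 := esym_pascal p 1 0
      rw [esym_top, esym_zero, Finset.prod_range_one] at h1
      rw [h1]
      ring
    rw [h]
    push_cast
    ring
  | more n ih1 ih2 =>
    show dseq _ _ (n+2) = _
    rw [dseq, ih1, ih2]
    have hr : esym p 0 (n+3) (n+2)
        = (p (n+1) + p (n+2)) * esym p 0 (n+2) (n+1) - (p (n+1))^2 * esym p 0 (n+1) n :=
      esym_rec p n
    show ((p (n+1) : ℝ) + (p (n+2) : ℝ)) * _ - (-(p (n+1) : ℝ))^2 * _ = ((esym p 0 (n+3) (n+2) : ℤ) : ℝ)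
    rw [hr]
    push_cast
    ring

lemma sgn_intCast (z : ℤ) : sgn ((z : ℝ)) = z.sign := by
  rcases lt_trichotomy z 0 with h | h | h
  · have hr : ((z:ℝ)) < 0 := by exact_mod_cast h
    unfold sgn
    rw [if_neg (by linarith), if_pos hr, Int.sign_eq_neg_one_of_neg h]
  · subst h
    simp [sgn]
  · have hr : (0:ℝ) < (z:ℝ) := by exact_mod_cast h
    unfold sgn
    rw [if_pos hr, Int.sign_eq_one_of_pos h]

lemma triM_map (p : ℕ → ℤ) (m : ℕ) :
    (triM p m).map (fun x : ℤ => (x : ℝ))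
      = tri (fun j => ((p j : ℝ) + (p (j+1) : ℝ))) (fun j => -(p (j+1) : ℝ)) m := by
  ext t u
  simp only [Matrix.map_apply, triM, tri, Matrix.of_apply]
  split_ifs with h1 h2 h3
  · push_cast; ring
  · rw [← h2]; push_cast; ring
  · rw [← h3]; push_cast; ring
  · norm_num


/-- The signature of `M` regarded as a real symmetric matrix (the number of
positive eigenvalues minus the number of negative eigenvalues, with multiplicity)
equals `Σ_{i=1}^{n−1} sign(σ_{i−1}·σ_i)` where `σ_i = σ_i(p₁,…,p_{i+1})`. -/
theorem stmt15 (n : ℕ) (hn : 3 ≤ n) (hodd : Odd n) (p : ℕ → ℤ)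
    (hpodd : ∀ i, i < n → Odd (p i))
    (hM : ((triM p (n - 1)).map (fun x : ℤ => (x : ℝ))).IsHermitian) :
    ((Finset.univ.filter fun t => 0 < hM.eigenvalues t).card : ℤ) -
        ((Finset.univ.filter fun t => hM.eigenvalues t < 0).card : ℤ) =
      ∑ t ∈ Finset.range (n - 1), (esym p 0 (t + 1) t * esym p 0 (t + 2) (t + 1)).sign := by
  have hbne : ∀ k, k + 2 ≤ n - 1 → (fun j => -(p (j+1) : ℝ)) k ≠ 0 := by
    intro k hk
    have hodd' : Odd (p (k+1)) := hpodd (k+1) (by omega)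
    have hne : p (k+1) ≠ 0 := by
      rintro h0
      rw [h0] at hodd'
      rcases hodd' with ⟨c, hc⟩
      omega
    simp only [ne_eq, neg_eq_zero, Int.cast_eq_zero]
    exact hne
  have h1 := main (n-1) (fun j => ((p j : ℝ) + (p (j+1) : ℝ))) (fun j => -(p (j+1) : ℝ)) hbne
  have h2 := hasSig_herm _ hM
  rw [← triM_map p (n-1)] at h1
  have h3 := hasSig_unique h2 h1
  rw [h3]
  apply Finset.sum_congr rfl
  intro t _
  rw [dseq_cast p t, dseq_cast p (t+1), ← Int.cast_mul, sgn_intCast]
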